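/- Let β ∈ [1/2, log₂(3/2)], let C_β = 2·√(2^{β+1} − 2), and define B(t) = C_β · t(1 − t). Then for all real numbers x, y with 0 ≤ y ≤ 1 and 0 ≤ x ≤ y − B(y), one has (y − x) + (2^β − 1)·B(y) + B(x) ≥ 2·B((x + y)/2). -/

import Mathlib

/-!
Put `c = √(2^{β+1} − 2)`, `u = 2^β` and `d = y − x`, so that `B(t) = 2c t(1−t)` and `c² = 2u − 2`.
Since `B` is quadratic with leading coefficient `−2c`, its second difference is
`B(x) + B(y) − 2B((x+y)/2) = −c d²`, and the claim becomes `q(d) ≥ 0` for the concave quadratic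
`q(d) = d + (u − 2) B(y) − c d²` on the interval `B(y) ≤ d ≤ y`. It therefore suffices to check
the two endpoints: `q(B(y)) = (u − 1) B(y) (1 − 2y)²`, and
`q(y) = (y − B(y)) (1 − c) + B(y) (u − 1/2 − c)`, where `c ≤ 1` and `c ≤ u − 1/2` because
`u ≤ 3/2` and `(u − 1/2)² − c² = (u − 3/2)²`.
-/

/-- The quadratic polynomial `B(t) = C_β t(1−t)` with `C_β = 2√(2^{β+1} − 2)`. -/
noncomputable def Bquad (β t : ℝ) : ℝ := 2 * Real.sqrt ((2 : ℝ) ^ (β + 1) - 2) * (t * (1 - t))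

lemma quadratic_nonneg_of_mem_Icc_of_endpoints {c p r a b d : ℝ} (hc : 0 ≤ c)
    (had : a ≤ d) (hdb : d ≤ b) (ha : 0 ≤ p + r * a - c * a ^ 2)
    (hb : 0 ≤ p + r * b - c * b ^ 2) : 0 ≤ p + r * d - c * d ^ 2 := by
  rcases had.eq_or_lt with rfl | had
  · exact ha
  have interpolation : (b - a) * (p + r * d - c * d ^ 2) =
      (b - d) * (p + r * a - c * a ^ 2) + (d - a) * (p + r * b - c * b ^ 2)
        + c * (b - a) * (d - a) * (b - d) := by ring
  refine nonneg_of_mul_nonneg_right ?_ (sub_pos.2 (had.trans_le hdb))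
  rw [interpolation]
  have hbd := sub_nonneg.2 hdb
  have hda := sub_nonneg.2 had.le
  have hba := sub_nonneg.2 (had.le.trans hdb)
  exact add_nonneg (add_nonneg (mul_nonneg hbd ha) (mul_nonneg hda hb))
    (mul_nonneg (mul_nonneg (mul_nonneg hc hba) hda) hbd)

lemma Bquad_add_Bquad_sub_two_mul_Bquad_midpoint (β x y : ℝ) :
    Bquad β x + Bquad β y - 2 * Bquad β ((x + y) / 2) =
      -Real.sqrt ((2 : ℝ) ^ (β + 1) - 2) * (y - x) ^ 2 := by
  unfold Bquad
  ring

lemma sq_sqrt_two_rpow_add_one_sub_two {β : ℝ} (hβ : 0 ≤ β) :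
    Real.sqrt ((2 : ℝ) ^ (β + 1) - 2) ^ 2 = 2 * (2 : ℝ) ^ β - 2 := by
  have h2β : (2 : ℝ) ^ (β + 1) = 2 * 2 ^ β := by
    rw [Real.rpow_add_one two_ne_zero, mul_comm]
  have h1 : (1 : ℝ) ≤ 2 ^ β := Real.one_le_rpow one_le_two hβ
  rw [Real.sq_sqrt (by linarith), h2β]

lemma two_rpow_le_three_halves {β : ℝ} (hβ : β ≤ Real.logb 2 (3 / 2)) : (2 : ℝ) ^ β ≤ 3 / 2 :=
  calc (2 : ℝ) ^ β ≤ 2 ^ Real.logb 2 (3 / 2) := Real.rpow_le_rpow_of_exponent_le one_le_two hβ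
    _ = 3 / 2 := Real.rpow_logb two_pos (by norm_num) (by norm_num)

lemma two_point_quadratic_nonneg {c u x y : ℝ} (hc0 : 0 ≤ c) (hc : c ^ 2 = 2 * u - 2)
    (hu : u ≤ 3 / 2) (hy0 : 0 ≤ y) (hy1 : y ≤ 1) (hx0 : 0 ≤ x)
    (hx : x ≤ y - 2 * c * (y * (1 - y))) :
    0 ≤ (y - x) + (u - 2) * (2 * c * (y * (1 - y))) - c * (y - x) ^ 2 := by
  set a := 2 * c * (y * (1 - y)) with ha_def
  have ha : 0 ≤ a := by have := sub_nonneg.2 hy1; positivity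
  have hu1 : 1 ≤ u := by nlinarith [sq_nonneg c]
  have hc1 : c ≤ 1 := by nlinarith
  have hcu : c ≤ u - 1 / 2 := by nlinarith [sq_nonneg (u - 3 / 2)]
  suffices 0 ≤ (u - 2) * a + 1 * (y - x) - c * (y - x) ^ 2 by linarith
  refine quadratic_nonneg_of_mem_Icc_of_endpoints (a := a) (b := y) hc0
    (by linarith) (by linarith) ?_ ?_
  · have low : (u - 2) * a + 1 * a - c * a ^ 2 = (u - 1) * a * (1 - 2 * y) ^ 2 := by
      rw [ha_def]
      linear_combination -4 * c * (y * (1 - y)) ^ 2 * hc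
    rw [low]
    have := sub_nonneg.2 hu1
    positivity
  · have high : (u - 2) * a + 1 * y - c * y ^ 2 = (y - a) * (1 - c) + a * (u - 1 / 2 - c) := by
      rw [ha_def]
      ring
    rw [high]
    exact add_nonneg (mul_nonneg (by linarith) (by linarith)) (mul_nonneg ha (by linarith))

/-- for `β ∈ [1/2, log₂(3/2)]`, `0 ≤ y ≤ 1` and `0 ≤ x ≤ y − B(y)`,
`(y−x) + (2^β − 1) B(y) + B(x) ≥ 2 B((x+y)/2)`. -/
theorem two_point_quad_linear (β : ℝ) (hβ : β ∈ Set.Icc (1 / 2 : ℝ) (Real.logb 2 (3 / 2)))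
    (x y : ℝ) (hy0 : 0 ≤ y) (hy1 : y ≤ 1) (hx0 : 0 ≤ x) (hx : x ≤ y - Bquad β y) :
    (y - x) + ((2 : ℝ) ^ β - 1) * Bquad β y + Bquad β x ≥ 2 * Bquad β ((x + y) / 2) := by
  have hc := sq_sqrt_two_rpow_add_one_sub_two (by linarith [hβ.1] : 0 ≤ β)
  have hq := two_point_quadratic_nonneg (Real.sqrt_nonneg _) hc (two_rpow_le_three_halves hβ.2)
    hy0 hy1 hx0 hx
  have hsecond := Bquad_add_Bquad_sub_two_mul_Bquad_midpoint β x y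
  unfold Bquad at hsecond ⊢
  linarith
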